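/- arXiv:2605.00917 — 4 statements merged into one kernel-verified Lean document; each statement's English description precedes it below -/
import Mathlib

section
/- Let T : (ℝⁿ)^d → ℝ be a symmetric multilinear map, i.e., T(x_{σ(1)},…,x_{σ(d)}) = T(x₁,…,x_d) for every permutation σ of {1,…,d} and all x₁,…,x_d ∈ ℝⁿ. Then sup { |T(x₁,…,x_d)| : ‖x₁‖ = ⋯ = ‖x_d‖ = 1 } = sup { |T(x,…,x)| : ‖x‖ = 1 }, where ‖·‖ is the Euclidean norm on ℝⁿ (Banach's theorem on symmetric multilinear forms). -/
/-!
Maximize `|T|` over tuples of unit vectors (a compact set), and among the maximizers maximize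
`‖x₁ + ⋯ + x_d‖`. If two entries `a`, `b` of this tuple were not equal up to sign, polarization
in these two slots, `4 T(…a…b…) = T(…a+b…a+b…) - T(…a-b…a-b…)`, together with
`‖a + b‖² + ‖a - b‖² = 4`, shows that replacing both by `±(a + b) / ‖a + b‖` keeps `|T|` maximal;
since `‖a + b‖ < 2`, one of the two signs strictly increases `‖∑ xₖ‖`. Hence all entries are
`±x₁`, and `|T(x₁, …, x₁)|` is the maximum.
-/

open Function

namespace LinearMap

variable {M : Type*} [AddCommGroup M] [Module ℝ M]

theorem four_mul_apply_eq_sub_of_comm (B : M →ₗ[ℝ] M →ₗ[ℝ] ℝ) (hB : ∀ a b, B a b = B b a)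
    (a b : M) : 4 * B a b = B (a + b) (a + b) - B (a - b) (a - b) := by
  simp only [map_add, map_sub, add_apply, sub_apply, hB b a]
  ring

end LinearMap

section InnerProduct

variable {E : Type*} [NormedAddCommGroup E] [InnerProductSpace ℝ E]

namespace LinearMap

theorem apply_self_eq_norm_sq_mul (B : E →ₗ[ℝ] E →ₗ[ℝ] ℝ) (w : E) :
    B w w = ‖w‖ ^ 2 * B (‖w‖⁻¹ • w) (‖w‖⁻¹ • w) := by
  rcases eq_or_ne w 0 with rfl | hw
  · simp
  · have : ‖w‖ ≠ 0 := norm_ne_zero_iff.2 hw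
    simp only [map_smul, smul_apply, smul_eq_mul]
    field_simp

theorem abs_apply_self_le_mul_norm_sq {B : E →ₗ[ℝ] E →ₗ[ℝ] ℝ} {m : ℝ}
    (hB : ∀ v, ‖v‖ = 1 → |B v v| ≤ m) (w : E) : |B w w| ≤ m * ‖w‖ ^ 2 := by
  rcases eq_or_ne w 0 with rfl | hw
  · simp
  · rw [apply_self_eq_norm_sq_mul, abs_mul, abs_of_nonneg (by positivity), mul_comm]
    exact mul_le_mul_of_nonneg_right (hB _ (norm_smul_inv_norm hw)) (by positivity)

theorem abs_apply_normalize_add_eq {B : E →ₗ[ℝ] E →ₗ[ℝ] ℝ} (hB : ∀ a b, B a b = B b a) {m : ℝ}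
    (hBm : ∀ v, ‖v‖ = 1 → |B v v| ≤ m) {a b : E} (ha : ‖a‖ = 1) (hb : ‖b‖ = 1)
    (hab : a + b ≠ 0) (hm : |B a b| = m) :
    |B (‖a + b‖⁻¹ • (a + b)) (‖a + b‖⁻¹ • (a + b))| = m := by
  set u := ‖a + b‖⁻¹ • (a + b)
  have hpar : ‖a + b‖ ^ 2 + ‖a - b‖ ^ 2 = 4 := by
    have := parallelogram_law_with_norm ℝ a b
    rw [ha, hb] at this
    linarith
  have hpos : 0 < ‖a + b‖ ^ 2 := by positivity
  have h4m : 4 * m ≤ ‖a + b‖ ^ 2 * |B u u| + m * ‖a - b‖ ^ 2 :=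
    calc 4 * m = |B (a + b) (a + b) - B (a - b) (a - b)| := by
          rw [← four_mul_apply_eq_sub_of_comm B hB, abs_mul, hm]; norm_num
      _ ≤ |B (a + b) (a + b)| + |B (a - b) (a - b)| := abs_sub _ _
      _ ≤ ‖a + b‖ ^ 2 * |B u u| + m * ‖a - b‖ ^ 2 := by
          rw [apply_self_eq_norm_sq_mul B (a + b), abs_mul, abs_of_pos hpos]
          gcongr
          exact abs_apply_self_le_mul_norm_sq hBm _
  refine le_antisymm (hBm u (norm_smul_inv_norm hab)) (le_of_mul_le_mul_left ?_ hpos)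
  rw [eq_sub_of_add_eq' hpar] at h4m
  linarith

end LinearMap

theorem norm_add_smul_lt_or_of_abs_lt_two {r u : E} (hu : ‖u‖ = 1) {c : ℝ} (hc : |c| < 2) :
    ‖r + c • u‖ < ‖r + (2 : ℝ) • u‖ ∨ ‖r + c • u‖ < ‖r + (2 : ℝ) • -u‖ := by
  have hsq : ∀ s : ℝ, ‖r + s • u‖ ^ 2 = ‖r‖ ^ 2 + 2 * s * inner ℝ r u + s ^ 2 := fun s => by
    rw [norm_add_sq_real, real_inner_smul_right, norm_smul, hu, Real.norm_eq_abs, mul_one,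
      sq_abs]
    ring
  have hc2 : c ^ 2 < 4 := by nlinarith [abs_nonneg c, sq_abs c]
  rw [smul_neg, ← neg_smul]
  rcases le_total 0 (inner ℝ r u) with hp | hp
  · left
    refine lt_of_pow_lt_pow_left₀ 2 (norm_nonneg _) ?_
    rw [hsq, hsq]
    nlinarith [le_abs_self c]
  · right
    refine lt_of_pow_lt_pow_left₀ 2 (norm_nonneg _) ?_
    rw [hsq, hsq]
    nlinarith [neg_abs_le c]

end InnerProduct

theorem Function.update_update_comp_swap {ι α : Type*} [DecidableEq ι] (x : ι → α) {i j : ι}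
    (hij : i ≠ j) (a b : α) :
    update (update x i a) j b ∘ Equiv.swap i j = update (update x i b) j a := by
  ext k
  rcases eq_or_ne k i with rfl | hki
  · simp [hij]
  rcases eq_or_ne k j with rfl | hkj
  · simp [hij]
  · simp [Equiv.swap_apply_of_ne_of_ne hki hkj, hki, hkj]

namespace MultilinearMap

variable {ι M : Type*} [DecidableEq ι] [AddCommGroup M] [Module ℝ M]

def toLinearMap₂ (T : MultilinearMap ℝ (fun _ : ι => M) ℝ) (x : ι → M) {i j : ι} (hij : i ≠ j) :
    M →ₗ[ℝ] M →ₗ[ℝ] ℝ :=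
  LinearMap.mk₂ ℝ (fun a b => T (update (update x i a) j b))
    (fun a a' b => by simp only [update_comm hij, T.map_update_add])
    (fun c a b => by simp only [update_comm hij, T.map_update_smul, smul_eq_mul])
    (fun a b b' => T.map_update_add _ j b b')
    (fun c a b => T.map_update_smul _ j c b)

@[simp]
theorem toLinearMap₂_apply (T : MultilinearMap ℝ (fun _ : ι => M) ℝ) (x : ι → M) {i j : ι}
    (hij : i ≠ j) (a b : M) : T.toLinearMap₂ x hij a b = T (update (update x i a) j b) :=
  rfl

theorem toLinearMap₂_comm {T : MultilinearMap ℝ (fun _ : ι => M) ℝ}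
    (hT : ∀ (σ : Equiv.Perm ι) (x : ι → M), T (fun k => x (σ k)) = T x) (x : ι → M) {i j : ι}
    (hij : i ≠ j) (a b : M) : T.toLinearMap₂ x hij a b = T.toLinearMap₂ x hij b a := by
  rw [toLinearMap₂_apply, toLinearMap₂_apply, ← hT (Equiv.swap i j)]
  exact congrArg T (update_update_comp_swap x hij a b)

end MultilinearMap

theorem Finset.sum_univ_update {ι G : Type*} [Fintype ι] [DecidableEq ι] [AddCommGroup G]
    (f : ι → G) (i : ι) (b : G) : ∑ k, update f i b k = ∑ k, f k - f i + b := by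
  rw [Finset.sum_update_of_mem (Finset.mem_univ i),
    Finset.sum_eq_add_sum_sdiff_singleton_of_mem (Finset.mem_univ i) f]
  abel

theorem norm_update_eq_one {ι E : Type*} [DecidableEq ι] [Norm E] {x : ι → E}
    (hx : ∀ k, ‖x k‖ = 1) {i : ι} {s : E} (hs : ‖s‖ = 1) (k : ι) : ‖update x i s k‖ = 1 := by
  rcases eq_or_ne k i with rfl | hki
  · simpa using hs
  · simpa [hki] using hx k

theorem MultilinearMap.exists_abs_eq_norm_sum_gt {ι E : Type*} [Fintype ι] [DecidableEq ι]
    [NormedAddCommGroup E] [InnerProductSpace ℝ E]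
    {T : MultilinearMap ℝ (fun _ : ι => E) ℝ}
    (hT : ∀ (σ : Equiv.Perm ι) (x : ι → E), T (fun k => x (σ k)) = T x) {m : ℝ}
    (hTm : ∀ y : ι → E, (∀ k, ‖y k‖ = 1) → |T y| ≤ m) {x : ι → E} (hx : ∀ k, ‖x k‖ = 1)
    (hxm : |T x| = m) {i j : ι} (hij : i ≠ j) (hne : x j ≠ x i) (hne_neg : x j ≠ -x i) :
    ∃ z : ι → E, (∀ k, ‖z k‖ = 1) ∧ |T z| = m ∧ ‖∑ k, x k‖ < ‖∑ k, z k‖ := by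
  set B := T.toLinearMap₂ x hij
  have hunit : ∀ s : E, ‖s‖ = 1 → ∀ k, ‖update (update x i s) j s k‖ = 1 := fun s hs =>
    norm_update_eq_one (norm_update_eq_one hx hs) hs
  have hBm : ∀ v, ‖v‖ = 1 → |B v v| ≤ m := fun v hv => hTm _ (hunit v hv)
  have hab : x i + x j ≠ 0 := fun h => hne_neg (eq_neg_of_add_eq_zero_right h)
  set c := ‖x i + x j‖
  set u := c⁻¹ • (x i + x j)
  have hu : ‖u‖ = 1 := norm_smul_inv_norm hab
  have hBu : |B u u| = m := by
    refine LinearMap.abs_apply_normalize_add_eq (T.toLinearMap₂_comm hT x hij) hBm (hx i) (hx j)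
      hab ?_
    simpa [B] using hxm
  have hc : |c| < 2 := by
    have hray : ¬SameRay ℝ (x i) (x j) := fun h =>
      hne (h.eq_of_norm_eq ((hx i).trans (hx j).symm)).symm
    have := norm_add_lt_of_not_sameRay hray
    rw [hx i, hx j, one_add_one_eq_two] at this
    rwa [abs_of_nonneg (norm_nonneg _)]
  set r := ∑ k, x k - x i - x j with hr
  have hsum_x : ∑ k, x k = r + c • u := by
    rw [hr, smul_inv_smul₀ (norm_ne_zero_iff.2 hab)]
    abel
  have hsum : ∀ s : E, ∑ k, update (update x i s) j s k = r + (2 : ℝ) • s := fun s => by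
    rw [Finset.sum_univ_update, Finset.sum_univ_update, update_of_ne hij.symm, two_smul, hr]
    abel
  have hexchange : ∀ s : E, ‖s‖ = 1 → B s s = B u u → ‖r + c • u‖ < ‖r + (2 : ℝ) • s‖ →
      ∃ z : ι → E, (∀ k, ‖z k‖ = 1) ∧ |T z| = m ∧ ‖∑ k, x k‖ < ‖∑ k, z k‖ :=
    fun s hs hBs hlt => ⟨_, hunit s hs, hBs ▸ hBu, by rwa [hsum_x, hsum]⟩
  rcases norm_add_smul_lt_or_of_abs_lt_two hu hc with h | h
  · exact hexchange u hu rfl h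
  · exact hexchange (-u) (by rwa [norm_neg]) (by simp) h

theorem MultilinearMap.abs_apply_eq_of_forall_eq_or_eq_neg {ι M : Type*} [Fintype ι]
    [AddCommGroup M] [Module ℝ M] (T : MultilinearMap ℝ (fun _ : ι => M) ℝ) {x : ι → M} {e : M}
    (h : ∀ k, x k = e ∨ x k = -e) : |T x| = |T fun _ => e| := by
  have hsign : ∀ k, ∃ c : ℝ, |c| = 1 ∧ x k = c • e := fun k =>
    (h k).elim (fun hk => ⟨1, by simp, by simp [hk]⟩) (fun hk => ⟨-1, by simp, by simp [hk]⟩)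
  choose c hc_abs hc using hsign
  rw [show x = fun k => c k • e from funext hc, T.map_smul_univ, smul_eq_mul, abs_mul,
    Finset.abs_prod]
  simp [hc_abs]

namespace ContinuousMultilinearMap

variable {ι E : Type*} [Fintype ι] [NormedAddCommGroup E] [InnerProductSpace ℝ E]
  [FiniteDimensional ℝ E] [Nontrivial E]

theorem exists_maximizer_forall_eq_or_eq_neg (T : ContinuousMultilinearMap ℝ (fun _ : ι => E) ℝ)
    (hT : ∀ (σ : Equiv.Perm ι) (x : ι → E), T (fun k => x (σ k)) = T x) :
    ∃ x : ι → E, (∀ k, ‖x k‖ = 1) ∧ (∀ y : ι → E, (∀ k, ‖y k‖ = 1) → |T y| ≤ |T x|) ∧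
      ∀ k l, x l = x k ∨ x l = -x k := by
  classical
  set K : Set (ι → E) := Set.univ.pi fun _ => Metric.sphere 0 1
  have hmemK : ∀ y, y ∈ K ↔ ∀ k, ‖y k‖ = 1 := by simp [K]
  have hK : IsCompact K := isCompact_univ_pi fun _ => isCompact_sphere 0 1
  obtain ⟨e, he⟩ := (NormedSpace.sphere_nonempty (x := (0 : E))).2 zero_le_one
  obtain ⟨x₀, hx₀K, hx₀⟩ := hK.exists_isMaxOn ⟨fun _ => e, fun _ _ => he⟩
    T.coe_continuous.abs.continuousOn
  have hS : IsCompact (K ∩ {y | |T y| = |T x₀|}) :=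
    hK.inter_right (isClosed_eq (by fun_prop) continuous_const)
  obtain ⟨x, ⟨hxK, hxm⟩, hxmax⟩ := hS.exists_isMaxOn ⟨x₀, hx₀K, rfl⟩
    (by fun_prop : Continuous fun y : ι → E => ‖∑ k, y k‖).continuousOn
  have hbound : ∀ y : ι → E, (∀ k, ‖y k‖ = 1) → |T y| ≤ |T x₀| := fun y hy =>
    hx₀ ((hmemK y).2 hy)
  refine ⟨x, (hmemK x).1 hxK, hxm ▸ hbound, fun k l => ?_⟩
  by_contra! hkl
  have hne : k ≠ l := by
    rintro rfl
    exact hkl.1 rfl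
  obtain ⟨z, hz, hzm, hlt⟩ := T.toMultilinearMap.exists_abs_eq_norm_sum_gt hT hbound
    ((hmemK x).1 hxK) hxm hne hkl.1 hkl.2
  exact (hxmax ⟨(hmemK z).2 hz, hzm⟩).not_gt hlt

theorem exists_isGreatest_abs_apply_and_abs_apply_diag
    (T : ContinuousMultilinearMap ℝ (fun _ : ι => E) ℝ)
    (hT : ∀ (σ : Equiv.Perm ι) (x : ι → E), T (fun k => x (σ k)) = T x) :
    ∃ m, IsGreatest {r : ℝ | ∃ x : ι → E, (∀ i, ‖x i‖ = 1) ∧ r = |T x|} m ∧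
      IsGreatest {r : ℝ | ∃ x : E, ‖x‖ = 1 ∧ r = |T fun _ => x|} m := by
  obtain ⟨x, hx, hmax, hsign⟩ := T.exists_maximizer_forall_eq_or_eq_neg hT
  obtain ⟨e, he, hxe⟩ : ∃ e : E, ‖e‖ = 1 ∧ ∀ k, x k = e ∨ x k = -e := by
    cases isEmpty_or_nonempty ι with
    | inl _ =>
      obtain ⟨e, he⟩ := exists_norm_eq E zero_le_one
      exact ⟨e, he, isEmptyElim⟩
    | inr hι =>
      obtain ⟨k₀⟩ := hι
      exact ⟨x k₀, hx k₀, hsign k₀⟩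
  refine ⟨|T x|, ⟨⟨x, hx, rfl⟩, ?_⟩,
    ⟨⟨e, he, T.toMultilinearMap.abs_apply_eq_of_forall_eq_or_eq_neg hxe⟩, ?_⟩⟩
  · rintro r ⟨y, hy, rfl⟩
    exact hmax y hy
  · rintro r ⟨y, hy, rfl⟩
    exact hmax _ fun _ => hy

end ContinuousMultilinearMap

/-- Banach's theorem on symmetric multilinear forms: for a symmetric continuous
multilinear map `T : (ℝⁿ)^d → ℝ`, the supremum of `|T(x₁,…,x_d)|` over tuples
of unit vectors equals the supremum of `|T(x,…,x)|` over unit vectors. -/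
theorem banach_symmetric_multilinear (n d : ℕ) (hn : 0 < n)
    (T : ContinuousMultilinearMap ℝ (fun _ : Fin d => EuclideanSpace ℝ (Fin n)) ℝ)
    (hsymm : ∀ (σ : Equiv.Perm (Fin d)) (x : Fin d → EuclideanSpace ℝ (Fin n)),
      T (fun i => x (σ i)) = T x) :
    sSup {r : ℝ | ∃ x : Fin d → EuclideanSpace ℝ (Fin n),
        (∀ i, ‖x i‖ = 1) ∧ r = |T x|} =
    sSup {r : ℝ | ∃ x : EuclideanSpace ℝ (Fin n),
        ‖x‖ = 1 ∧ r = |T (fun _ => x)|} := by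
  have : Nonempty (Fin n) := ⟨⟨0, hn⟩⟩
  obtain ⟨m, h_multi, h_diag⟩ := T.exists_isGreatest_abs_apply_and_abs_apply_diag hsymm
  rw [h_multi.csSup_eq, h_diag.csSup_eq]
end

section
/- Let h be a polynomial in n real variables of total degree at most 4, and let H be a polynomial in the n+1 variables (x₀, z₁, …, z_n), homogeneous of degree 4, satisfying H(t, t·x) = t⁴ · h(x) for all t ∈ ℝ with t ≠ 0 and all x ∈ ℝⁿ. Then the following are equivalent: (a) there exists x ∈ [−1,1]ⁿ with h(x) = 0; (b) there exist x₀ ∈ ℝ and z, s ∈ ℝⁿ with (x₀, z, s) ≠ 0 such that z_i² + s_i² − x₀² = 0 for all i = 1,…,n and H(x₀, z) = 0. -/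
/-- Correctness of the box encoding: for `h` of total degree at most `4` with
degree-4 homogenization `H`, feasibility of `h = 0` on `[−1,1]ⁿ` is equivalent
to existence of a nonzero `(x₀, z, s)` satisfying the box equations and
`H(x₀, z) = 0`. -/
theorem box_encoding_equivalence (n : ℕ) (h : MvPolynomial (Fin n) ℝ)
    (hdeg : h.totalDegree ≤ 4)
    (H : MvPolynomial (Fin (n + 1)) ℝ)
    (hhom : H.IsHomogeneous 4)
    (hH : ∀ t : ℝ, t ≠ 0 → ∀ x : Fin n → ℝ,
      MvPolynomial.eval (Fin.cons t (fun i => t * x i) : Fin (n + 1) → ℝ) H =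
        t ^ 4 * MvPolynomial.eval x h) :
    (∃ x : Fin n → ℝ, (∀ i, x i ∈ Set.Icc (-1 : ℝ) 1) ∧ MvPolynomial.eval x h = 0)
    ↔
    (∃ (x₀ : ℝ) (z s : Fin n → ℝ),
      ¬(x₀ = 0 ∧ z = 0 ∧ s = 0) ∧
      (∀ i : Fin n, z i ^ 2 + s i ^ 2 - x₀ ^ 2 = 0) ∧
      MvPolynomial.eval (Fin.cons x₀ z : Fin (n + 1) → ℝ) H = 0) := by
  constructor
  · rintro ⟨x, hbox, hx⟩
    refine ⟨1, x, fun i => Real.sqrt (1 - x i ^ 2), ?_, ?_, ?_⟩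
    · rintro ⟨h1, -, -⟩; exact one_ne_zero h1
    · intro i
      have hi := hbox i
      have h1 : (0:ℝ) ≤ 1 - x i ^ 2 := by nlinarith [hi.1, hi.2]
      rw [Real.sq_sqrt h1]; ring
    · have := hH 1 one_ne_zero x
      simpa [hx] using this
  · rintro ⟨x₀, z, s, hnz, heq, hzero⟩
    have hx0 : x₀ ≠ 0 := by
      rintro rfl
      apply hnz
      refine ⟨rfl, ?_, ?_⟩ <;> funext i <;>
        · have := heq i
          show _ = (0:ℝ)
          nlinarith [sq_nonneg (z i), sq_nonneg (s i)]
    refine ⟨fun i => z i / x₀, fun i => ?_, ?_⟩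
    · have hi := heq i
      have hz2 : z i ^ 2 ≤ x₀ ^ 2 := by nlinarith [sq_nonneg (s i)]
      have hy2 : (z i / x₀) ^ 2 ≤ 1 := by
        rw [div_pow, div_le_one (by positivity)]; exact hz2
      constructor <;> nlinarith [sq_nonneg (z i / x₀ + 1), sq_nonneg (z i / x₀ - 1)]
    · have key := hH x₀ hx0 (fun i => z i / x₀)
      have hcons : (Fin.cons x₀ (fun i => x₀ * (z i / x₀)) : Fin (n+1) → ℝ)
          = Fin.cons x₀ z := by
        congr 1; funext i; field_simp
      rw [hcons, hzero] at key
      have h4 : x₀ ^ 4 ≠ 0 := pow_ne_zero _ hx0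
      exact (mul_eq_zero.mp key.symm).resolve_left h4
end

section
/- B is the greatest value of p on the unit sphere, i.e., IsGreatest { p(z) : z ∈ ℝ^m, ‖z‖ = 1 } B, if and only if there exists z ∈ ℝ^m with ‖z‖ = 1 such that zᵀ Q_i z = 0 for all i = 1,…,r. Here p(z) = B·‖z‖⁴ − Σ_{i=1}^r (zᵀ Q_i z)² and B = 1 + Σ_{i=1}^r ‖Q_i‖_F². -/
/-- Exact threshold equivalence: `B` is the greatest value of `p` on the unit
sphere iff the homogeneous quadratic system `zᵀQᵢz = 0` is feasible on the
sphere, where `p(z) = B‖z‖⁴ − Σᵢ (zᵀQᵢz)²` and `B = 1 + Σᵢ ‖Qᵢ‖_F²`. -/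
theorem quartic_isGreatest_iff_feasible (m r : ℕ) (hm : 0 < m) (hr : 0 < r)
    (Q : Fin r → Matrix (Fin m) (Fin m) ℝ) (hQ : ∀ i, (Q i).IsSymm)
    (B : ℝ) (hB : B = 1 + ∑ i, Real.sqrt (∑ a, ∑ b, (Q i a b) ^ 2) ^ 2) :
    IsGreatest {y : ℝ | ∃ z : EuclideanSpace ℝ (Fin m), ‖z‖ = 1 ∧
        y = B * ‖z‖ ^ 4 - ∑ i, (∑ a, ∑ b, z a * Q i a b * z b) ^ 2} B ↔
      ∃ z : EuclideanSpace ℝ (Fin m), ‖z‖ = 1 ∧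
        ∀ i, ∑ a, ∑ b, z a * Q i a b * z b = 0 := by
  constructor
  · rintro ⟨⟨z, hz, hzB⟩, -⟩
    refine ⟨z, hz, ?_⟩
    rw [hz] at hzB
    have hsum : ∑ i, (∑ a, ∑ b, z a * Q i a b * z b) ^ 2 = 0 := by linarith [hzB]
    have := (Finset.sum_eq_zero_iff_of_nonneg
      (fun i _ => sq_nonneg (∑ a, ∑ b, z a * Q i a b * z b))).mp hsum
    intro i
    exact pow_eq_zero_iff (n := 2) (by norm_num) |>.mp (this i (Finset.mem_univ i))
  · rintro ⟨z, hz, hzero⟩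
    constructor
    · exact ⟨z, hz, by simp [hz, hzero]⟩
    · rintro y ⟨w, hw, rfl⟩
      rw [hw]
      have : (0:ℝ) ≤ ∑ i, (∑ a, ∑ b, w a * Q i a b * w b) ^ 2 :=
        Finset.sum_nonneg fun i _ => sq_nonneg _
      nlinarith
end

section
/- The equality sSup { |p(z)| : z ∈ ℝ^m, ‖z‖ = 1 } = B holds if and only if there exists z ∈ ℝ^m with ‖z‖ = 1 such that zᵀ Q_i z = 0 for all i = 1,…,r, where p(z) = B·‖z‖⁴ − Σ_{i=1}^r (zᵀ Q_i z)² and B = 1 + Σ_{i=1}^r ‖Q_i‖_F². -/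
-- Cauchy-Schwarz bound for quadratic forms
lemma cs_bound_aux (m : ℕ) (Q : Matrix (Fin m) (Fin m) ℝ)
    (z : EuclideanSpace ℝ (Fin m)) (hz : ∑ a, (z a)^2 = 1) :
    (∑ a, ∑ b, z a * Q a b * z b)^2 ≤ ∑ a, ∑ b, (Q a b)^2 := by
  have h1 : ∑ a, ∑ b, z a * Q a b * z b
      = ∑ p ∈ Finset.univ ×ˢ (Finset.univ : Finset (Fin m)),
          (z p.1 * z p.2) * Q p.1 p.2 := by
    rw [Finset.sum_product]
    exact Finset.sum_congr rfl fun a _ => Finset.sum_congr rfl fun b _ => by ring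
  have h2 : ∑ p ∈ Finset.univ ×ˢ (Finset.univ : Finset (Fin m)),
      (z p.1 * z p.2)^2 = 1 := by
    rw [Finset.sum_product]
    simp only [mul_pow]
    rw [← Finset.sum_mul_sum]
    simp [hz]
  have h3 : ∑ a, ∑ b, (Q a b)^2
      = ∑ p ∈ Finset.univ ×ˢ (Finset.univ : Finset (Fin m)), (Q p.1 p.2)^2 := by
    rw [Finset.sum_product]
  calc (∑ a, ∑ b, z a * Q a b * z b)^2
      = (∑ p ∈ Finset.univ ×ˢ (Finset.univ : Finset (Fin m)),
          (z p.1 * z p.2) * Q p.1 p.2)^2 := by rw [h1]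
    _ ≤ (∑ p ∈ Finset.univ ×ˢ (Finset.univ : Finset (Fin m)), (z p.1 * z p.2)^2) *
        (∑ p ∈ Finset.univ ×ˢ (Finset.univ : Finset (Fin m)), (Q p.1 p.2)^2) :=
        Finset.sum_mul_sq_le_sq_mul_sq _ _ _
    _ = ∑ a, ∑ b, (Q a b)^2 := by rw [h2, one_mul, h3]

/-- Equality formulation: `sSup {|p(z)| : ‖z‖ = 1} = B` iff there is a unit
`z` with `zᵀQᵢz = 0` for all `i`, where
`p(z) = B‖z‖⁴ − Σᵢ (zᵀQᵢz)²` and `B = 1 + Σᵢ ‖Qᵢ‖_F²`. -/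
theorem sSup_abs_eq_B_iff_feasible (m r : ℕ) (hm : 0 < m) (hr : 0 < r)
    (Q : Fin r → Matrix (Fin m) (Fin m) ℝ) (hQ : ∀ i, (Q i).IsSymm)
    (B : ℝ) (hB : B = 1 + ∑ i, Real.sqrt (∑ a, ∑ b, (Q i a b) ^ 2) ^ 2) :
    sSup {y : ℝ | ∃ z : EuclideanSpace ℝ (Fin m), ‖z‖ = 1 ∧
        y = |B * ‖z‖ ^ 4 - ∑ i, (∑ a, ∑ b, z a * Q i a b * z b) ^ 2|} = B ↔
      ∃ z : EuclideanSpace ℝ (Fin m), ‖z‖ = 1 ∧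
        ∀ i, ∑ a, ∑ b, z a * Q i a b * z b = 0 := by
  set f : EuclideanSpace ℝ (Fin m) → ℝ :=
    fun z => |B * ‖z‖ ^ 4 - ∑ i, (∑ a, ∑ b, z a * Q i a b * z b) ^ 2| with hf
  have hBval : B = 1 + ∑ i, ∑ a, ∑ b, (Q i a b)^2 := by
    rw [hB]
    congr 1
    refine Finset.sum_congr rfl fun i _ => ?_
    rw [Real.sq_sqrt]
    positivity
  have hsq : ∀ z : EuclideanSpace ℝ (Fin m), ‖z‖ = 1 → ∑ a, (z a)^2 = 1 := by
    intro z hz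
    have h := EuclideanSpace.norm_eq z
    have h2 : ‖z‖^2 = ∑ a, ‖z a‖^2 := by
      rw [h, Real.sq_sqrt (by positivity)]
    rw [hz] at h2
    simpa [Real.norm_eq_abs, sq_abs] using h2.symm
  -- value on the sphere
  have hval : ∀ z : EuclideanSpace ℝ (Fin m), ‖z‖ = 1 →
      f z = B - ∑ i, (∑ a, ∑ b, z a * Q i a b * z b)^2 ∧
      ∑ i, (∑ a, ∑ b, z a * Q i a b * z b)^2 ≤ B - 1 := by
    intro z hz
    have hT0 : (0:ℝ) ≤ ∑ i, (∑ a, ∑ b, z a * Q i a b * z b)^2 := by positivity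
    have hTle : ∑ i, (∑ a, ∑ b, z a * Q i a b * z b)^2 ≤ B - 1 := by
      rw [hBval]
      have : ∀ i : Fin r, (∑ a, ∑ b, z a * Q i a b * z b)^2 ≤ ∑ a, ∑ b, (Q i a b)^2 :=
        fun i => cs_bound_aux m (Q i) z (hsq z hz)
      calc ∑ i, (∑ a, ∑ b, z a * Q i a b * z b)^2
          ≤ ∑ i, ∑ a, ∑ b, (Q i a b)^2 := Finset.sum_le_sum fun i _ => this i
        _ = 1 + ∑ i, ∑ a, ∑ b, (Q i a b)^2 - 1 := by ring
    constructor
    · rw [hf]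
      simp only [hz, one_pow, mul_one]
      rw [abs_of_nonneg]
      linarith
    · exact hTle
  -- the set
  set S : Set ℝ := {y : ℝ | ∃ z : EuclideanSpace ℝ (Fin m), ‖z‖ = 1 ∧
      y = |B * ‖z‖ ^ 4 - ∑ i, (∑ a, ∑ b, z a * Q i a b * z b) ^ 2|} with hS
  have hSf : S = f '' Metric.sphere 0 1 := by
    ext y
    constructor
    · rintro ⟨z, hz, rfl⟩
      exact ⟨z, by simpa using hz, rfl⟩
    · rintro ⟨z, hz, rfl⟩
      exact ⟨z, by simpa using hz, rfl⟩
  have hfc : Continuous f := by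
    apply Continuous.abs
    apply Continuous.sub
    · exact continuous_const.mul (continuous_norm.pow 4)
    · refine continuous_finset_sum _ fun i _ => Continuous.pow ?_ 2
      refine continuous_finset_sum _ fun a _ => continuous_finset_sum _ fun b _ => ?_
      exact (((EuclideanSpace.proj a).continuous).mul continuous_const).mul
        (EuclideanSpace.proj b).continuous
  have hz0 : ∃ z : EuclideanSpace ℝ (Fin m), ‖z‖ = 1 := by
    refine ⟨EuclideanSpace.single ⟨0, hm⟩ 1, ?_⟩
    simp [EuclideanSpace.norm_single]
  obtain ⟨z0, hz0⟩ := hz0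
  have hne : S.Nonempty := ⟨f z0, z0, hz0, rfl⟩
  have hub : ∀ y ∈ S, y ≤ B := by
    rintro y ⟨z, hz, rfl⟩
    obtain ⟨h1, h2⟩ := hval z hz
    show f z ≤ B
    rw [h1]
    have : (0:ℝ) ≤ ∑ i, (∑ a, ∑ b, z a * Q i a b * z b)^2 := by positivity
    linarith
  constructor
  · intro hsup
    -- sup attained by compactness
    have hcs : (Metric.sphere (0 : EuclideanSpace ℝ (Fin m)) 1).Nonempty :=
      ⟨z0, by simpa using hz0⟩
    obtain ⟨zm, hzm, hmax⟩ := (isCompact_sphere (0 : EuclideanSpace ℝ (Fin m)) 1).exists_isMaxOn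
      hcs hfc.continuousOn
    have hzm1 : ‖zm‖ = 1 := by simpa using hzm
    have hle : sSup S ≤ f zm := by
      apply csSup_le hne
      rintro y ⟨z, hz, rfl⟩
      exact hmax (by simpa using hz)
    have : B ≤ f zm := hsup ▸ hle
    obtain ⟨h1, h2⟩ := hval zm hzm1
    have hT0 : (0:ℝ) ≤ ∑ i, (∑ a, ∑ b, zm a * Q i a b * zm b)^2 := by positivity
    have hTzero : ∑ i, (∑ a, ∑ b, zm a * Q i a b * zm b)^2 = 0 := by linarith
    refine ⟨zm, hzm1, fun i => ?_⟩
    have := (Finset.sum_eq_zero_iff_of_nonneg (fun i _ => by positivity)).mp hTzero i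
      (Finset.mem_univ i)
    exact pow_eq_zero_iff (by norm_num) |>.mp this
  · rintro ⟨z, hz, hzero⟩
    have hfz : f z = B := by
      rw [hf]
      simp only [hz, one_pow, mul_one]
      have : ∑ i, (∑ a, ∑ b, z a * Q i a b * z b)^2 = 0 :=
        Finset.sum_eq_zero fun i _ => by rw [hzero i]; ring
      rw [this, sub_zero, abs_of_nonneg]
      have : (0:ℝ) ≤ ∑ i, ∑ a, ∑ b, (Q i a b)^2 := by positivity
      linarith [hBval]
    apply le_antisymm
    · exact csSup_le hne hub
    · exact hfz ▸ le_csSup ⟨B, hub⟩ ⟨z, hz, rfl⟩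
end
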